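/- The resultant with respect to c of the polynomials 2c⁶ - 2tc⁴ + 3c² - ac³ - tac - a² and 2c⁴ + ac - 1 vanishes if and only if (t, a) satisfies 54a⁴ + (72t - t³)a² - (t⁴ - 16t² + 64) = 0, up to a nonzero constant factor; i.e., the resultant equals a nonzero constant multiple of a power of (54a⁴ + (72t - t³)a² - t⁴ + 16t² - 64). -/

import Mathlib

/-!
Modulo `q = 2c⁴ + ac - 1` one has `p ≡ -2ac³ + 4c² - (a² + t)`. Unitriangular row operations
replace the four rows `c³p, …, p` of the Sylvester matrix by their remainders modulo `q`; after
moving the six rows of `q` to the top the matrix is block upper triangular. Its diagonal blocks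
are the triangular `6 × 6` block of `q`, of determinant `2⁶`, and the `4 × 4` matrix of
multiplication by `p` on `ℝ[c]/(q)`, whose determinant is minus the quartic.
-/

/-- The Sylvester matrix (with respect to the variable `c`) of the polynomials
`p(c) = 2c⁶ - 2tc⁴ - ac³ + 3c² - tac - a²` and `q(c) = 2c⁴ + ac - 1`,
whose determinant is the resultant `Res_c(p, q)`. -/
noncomputable def sylvesterPQ (t a : ℝ) : Matrix (Fin 10) (Fin 10) ℝ :=
  !![2, 0, -2*t, -a, 3, -t*a, -a^2, 0, 0, 0;
     0, 2, 0, -2*t, -a, 3, -t*a, -a^2, 0, 0;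
     0, 0, 2, 0, -2*t, -a, 3, -t*a, -a^2, 0;
     0, 0, 0, 2, 0, -2*t, -a, 3, -t*a, -a^2;
     2, 0, 0, a, -1, 0, 0, 0, 0, 0;
     0, 2, 0, 0, a, -1, 0, 0, 0, 0;
     0, 0, 2, 0, 0, a, -1, 0, 0, 0;
     0, 0, 0, 2, 0, 0, a, -1, 0, 0;
     0, 0, 0, 0, 2, 0, 0, a, -1, 0;
     0, 0, 0, 0, 0, 2, 0, 0, a, -1]

open Matrix

/-- Row `i < 4` turns the row of `c^(3-i) p` into that of `c^(3-i) p mod q`, by subtracting the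
rows of the quotient times `q`. -/
def sylvesterPQReduction (t a : ℝ) : Matrix (Fin 10) (Fin 10) ℝ :=
  !![1, 0, 0, 0, -1, 0, t, a, -2, 0;
     0, 1, 0, 0, 0, -1, 0, t, a, -2;
     0, 0, 1, 0, 0, 0, -1, 0, t, a;
     0, 0, 0, 1, 0, 0, 0, -1, 0, t;
     0, 0, 0, 0, 1, 0, 0, 0, 0, 0;
     0, 0, 0, 0, 0, 1, 0, 0, 0, 0;
     0, 0, 0, 0, 0, 0, 1, 0, 0, 0;
     0, 0, 0, 0, 0, 0, 0, 1, 0, 0;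
     0, 0, 0, 0, 0, 0, 0, 0, 1, 0;
     0, 0, 0, 0, 0, 0, 0, 0, 0, 1]

def qSylvesterBlock (a : ℝ) : Matrix (Fin 6) (Fin 6) ℝ :=
  !![2, 0, 0, a, -1, 0;
     0, 2, 0, 0, a, -1;
     0, 0, 2, 0, 0, a;
     0, 0, 0, 2, 0, 0;
     0, 0, 0, 0, 2, 0;
     0, 0, 0, 0, 0, 2]

def qSylvesterTail (a : ℝ) : Matrix (Fin 6) (Fin 4) ℝ :=
  !![0, 0, 0, 0;
     0, 0, 0, 0;
     -1, 0, 0, 0;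
     a, -1, 0, 0;
     0, a, -1, 0;
     0, 0, a, -1]

/-- Row `k` holds the coefficients of `c^(3-k) p mod q` in the basis `c³, c², c, 1`. -/
def mulPModQ (t a : ℝ) : Matrix (Fin 4) (Fin 4) ℝ :=
  !![-t, -3*a, 2, 0;
     0, -t, -3*a, 2;
     4, 0, -t, -a;
     -2*a, 4, 0, -(a^2+t)]

theorem isUpperTriangular_sylvesterPQReduction (t a : ℝ) :
    (sylvesterPQReduction t a).IsUpperTriangular := by
  simp [IsUpperTriangular, BlockTriangular, Fin.forall_fin_succ, sylvesterPQReduction]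

theorem det_sylvesterPQReduction (t a : ℝ) : (sylvesterPQReduction t a).det = 1 := by
  rw [det_of_isUpperTriangular (isUpperTriangular_sylvesterPQReduction t a)]
  simp [Fin.prod_univ_succ, sylvesterPQReduction]

theorem det_qSylvesterBlock (a : ℝ) : (qSylvesterBlock a).det = 64 := by
  simp [det_succ_column_zero, Fin.sum_univ_succ, qSylvesterBlock]
  norm_num

theorem det_mulPModQ (t a : ℝ) :
    (mulPModQ t a).det = -(54 * a ^ 4 + (72 * t - t ^ 3) * a ^ 2 - t ^ 4 + 16 * t ^ 2 - 64) := by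
  simp [det_succ_row_zero, Fin.sum_univ_succ, Fin.succAbove, mulPModQ]
  ring

theorem finRotate_ten_pow_four_apply (i : Fin 10) : (finRotate 10 ^ 4) i = i + 4 := by
  revert i
  decide

theorem submatrix_sylvesterPQReduction_mul_sylvesterPQ (t a : ℝ) :
    (sylvesterPQReduction t a * sylvesterPQ t a).submatrix
        (finRotate 10 ^ 4 : Equiv.Perm (Fin 10)) id =
      reindex finSumFinEquiv finSumFinEquiv
        (fromBlocks (qSylvesterBlock a) (qSylvesterTail a) 0 (mulPModQ t a)) := by
  ext i j
  rw [submatrix_apply, finRotate_ten_pow_four_apply, sylvesterPQReduction, sylvesterPQ]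
  norm_num [cons_mul, vecMul_cons, cons_vecMul, empty_mul, vecMul_empty, empty_vecMul,
    smul_cons, smul_empty]
  fin_cases i <;> fin_cases j <;>
    simp [finSumFinEquiv, Fin.addCases, qSylvesterBlock, qSylvesterTail, mulPModQ] <;> ring

theorem det_sylvesterPQ (t a : ℝ) :
    (sylvesterPQ t a).det
      = -64 * (54 * a ^ 4 + (72 * t - t ^ 3) * a ^ 2 - t ^ 4 + 16 * t ^ 2 - 64) := by
  calc (sylvesterPQ t a).det
      = (sylvesterPQReduction t a * sylvesterPQ t a).det := by
        rw [det_mul, det_sylvesterPQReduction, one_mul]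
    _ = ((sylvesterPQReduction t a * sylvesterPQ t a).submatrix
          (finRotate 10 ^ 4 : Equiv.Perm (Fin 10)) id).det := by
        rw [det_permute, map_pow, sign_finRotate]
        norm_num
    _ = (fromBlocks (qSylvesterBlock a) (qSylvesterTail a) 0 (mulPModQ t a)).det := by
        rw [submatrix_sylvesterPQReduction_mul_sylvesterPQ, det_reindex_self]
    _ = -64 * (54 * a ^ 4 + (72 * t - t ^ 3) * a ^ 2 - t ^ 4 + 16 * t ^ 2 - 64) := by
        rw [det_fromBlocks_zero₂₁, det_qSylvesterBlock, det_mulPModQ]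
        ring

/-- The resultant in `c` of `2c⁶ - 2tc⁴ + 3c² - ac³ - tac - a²` and `2c⁴ + ac - 1`
is a nonzero constant multiple of a power of `54a⁴ + (72t - t³)a² - t⁴ + 16t² - 64`;
in particular it vanishes exactly where this quartic in `a` vanishes. -/
theorem resultant_factors :
    ∃ (C : ℝ) (k : ℕ), C ≠ 0 ∧ 0 < k ∧ ∀ t a : ℝ,
      (sylvesterPQ t a).det
        = C * (54 * a ^ 4 + (72 * t - t ^ 3) * a ^ 2
            - t ^ 4 + 16 * t ^ 2 - 64) ^ k :=
  ⟨-64, 1, by norm_num, one_pos, fun t a => by rw [pow_one, det_sylvesterPQ]⟩
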